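/- Let an index coding problem be given, let F be a field, L ≥ 1 an integer, and V_1,…,V_n ∈ F^L vectors assigned to the n messages; encode each message tuple w = (w_1,…,w_n) ∈ F^n as c(w) = Σ_{i=1}^n w_i V_i. Then every receiver can decode all of its demanded messages from the codeword and its side information — i.e., for every receiver j and all w, w' ∈ F^n with w_i = w'_i for all i ∈ S(j) and c(w) = c(w'), one has w_k = w'_k for every k ∈ D(j) — if and only if for every receiver j and every k ∈ D(j), V_k ∉ span{V_i : i ∈ Interf_k(j)}. -/

import Mathlib

/-!
Common definitions: an index coding problem with `n` messages (indexed by `Fin n`),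
`T ≥ 1` receivers, demand sets `D j` and side-information sets `S j`.
-/

/-- An index coding problem with `n` messages. -/
structure ICP (n : ℕ) where
  T : ℕ
  hT : 1 ≤ T
  D : Fin T → Finset (Fin n)
  S : Fin T → Finset (Fin n)
  hDS : ∀ j, Disjoint (D j) (S j)

namespace ICP

variable {n : ℕ}

/-- The interfering set `Interf_k(j)`: all messages other than `k` not in the side
information of receiver `j`, provided `k ∈ D j`; empty otherwise. -/
def Interf (P : ICP n) (k : Fin n) (j : Fin P.T) : Finset (Fin n) :=
  if k ∈ P.D j then Finset.univ \ insert k (P.S j) else ∅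

/-- All conflicts are resolved by the assignment `V` of `L`-length vectors over `F`
to the messages: for every message `k` and receiver `j`, `V k` is outside the span of
the vectors assigned to `Interf_k(j)`. -/
def Resolved (P : ICP n) (F : Type) [Field F] {L : ℕ} (V : Fin n → Fin L → F) : Prop :=
  ∀ (k : Fin n) (j : Fin P.T),
    V k ∉ Submodule.span F (V '' (P.Interf k j : Set (Fin n)))

/-- Rate `1/L` feasibility: there exist a finite field `F` and an assignment of
`L`-length vectors over `F` resolving all conflicts. -/
def RateFeasible (P : ICP n) (L : ℕ) : Prop :=
  ∃ (F : Type) (_ : Field F) (_ : Fintype F) (V : Fin n → Fin L → F),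
    P.Resolved F V

/-- Adjacency in the alignment graph: `i ≠ i'` both interfere at a receiver `j`
demanding some message `k ∉ {i, i'}`. -/
def AlignAdj (P : ICP n) (i i' : Fin n) : Prop :=
  i ≠ i' ∧ ∃ (j : Fin P.T) (k : Fin n), k ∈ P.D j ∧ k ≠ i ∧ k ≠ i' ∧
    i ∈ P.Interf k j ∧ i' ∈ P.Interf k j

/-- The alignment graph. -/
def alignGraph (P : ICP n) : SimpleGraph (Fin n) where
  Adj := P.AlignAdj
  symm := by
    refine ⟨?_⟩
    rintro a b ⟨hne, j, k, h1, h2, h3, h4, h5⟩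
    exact ⟨hne.symm, j, k, h1, h3, h2, h5, h4⟩
  loopless := by refine ⟨?_⟩; rintro a ⟨hne, -⟩; exact hne rfl

/-- Two messages lie in the same alignment set (connected component of the
alignment graph). -/
def SameAlignSet (P : ICP n) (i i' : Fin n) : Prop :=
  P.alignGraph.Reachable i i'

/-- Messages `i` and `k` are in conflict. -/
def InConflict (P : ICP n) (i k : Fin n) : Prop :=
  (∃ j, k ∈ P.D j ∧ i ∈ P.Interf k j) ∨ (∃ j, i ∈ P.D j ∧ k ∈ P.Interf i j)

/-- There is an internal conflict: a conflict between two messages lying in the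
same alignment set. -/
def HasInternalConflict (P : ICP n) : Prop :=
  ∃ i k, P.InConflict i k ∧ P.SameAlignSet i k

/-- The conflict hypergraph, given as the set of unordered pairs `{{k}, Interf_k(j)}`
over all receivers `j` and all demands `k ∈ D j`. -/
def conflictHypergraph (P : ICP n) : Set (Sym2 (Finset (Fin n))) :=
  {e | ∃ (j : Fin P.T) (k : Fin n), k ∈ P.D j ∧ e = s({k}, P.Interf k j)}

/-- The problem is groupcast: every message is demanded by at least one receiver. -/
def Groupcast (P : ICP n) : Prop := ∀ k : Fin n, ∃ j, k ∈ P.D j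

/-- `i 0, i 1, i 2, i 3` form an acyclic subset of messages of size 4. -/
def AcyclicSubset4 (P : ICP n) (i : Fin 4 → Fin n) : Prop :=
  Function.Injective i ∧
    ∃ j : Fin 4 → Fin P.T, ∀ m : Fin 4, i m ∈ P.D (j m) ∧
      ∀ m' : Fin 4, m' < m → i m' ∈ P.Interf (i m) (j m)

/-- The alignment set (connected component) of the vertex `v` has both a fork
(a vertex of degree at least 3) and a cycle all of whose vertices lie in it. -/
def HasForkAndCycle (P : ICP n) (v : Fin n) : Prop :=
  (∃ u, P.alignGraph.Reachable v u ∧ 3 ≤ (P.alignGraph.neighborSet u).ncard) ∧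
  (∃ (u : Fin n) (c : P.alignGraph.Walk u u), c.IsCycle ∧
      ∀ x ∈ c.support, P.alignGraph.Reachable v x)

/-- A triangular interfering set: a 3-element set of messages simultaneously
interfering at some receiver, at least two of which are in conflict. -/
def TriangularSet (P : ICP n) (W : Finset (Fin n)) : Prop :=
  W.card = 3 ∧ (∃ (j : Fin P.T) (k : Fin n), k ∈ P.D j ∧ W ⊆ P.Interf k j) ∧
    ∃ i i', i ∈ W ∧ i' ∈ W ∧ i ≠ i' ∧ P.InConflict i i'

/-- Two distinct triangular interfering sets are adjacent: they meet in exactly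
two messages which are in conflict. -/
def TriAdj (P : ICP n) (W1 W2 : Finset (Fin n)) : Prop :=
  P.TriangularSet W1 ∧ P.TriangularSet W2 ∧ W1 ≠ W2 ∧
    ∃ i i', i ≠ i' ∧ W1 ∩ W2 = {i, i'} ∧ P.InConflict i i'

/-- Two triangular interfering sets are connected: some finite sequence of
triangular interfering sets, with consecutive members adjacent, joins them. -/
def TriConnected (P : ICP n) (W1 W2 : Finset (Fin n)) : Prop :=
  P.TriangularSet W1 ∧ P.TriangularSet W2 ∧ Relation.ReflTransGen P.TriAdj W1 W2

/-- `W'` is a type-2 alignment set: the union of a maximal family of pairwise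
connected triangular interfering sets. -/
def IsType2AlignSet (P : ICP n) (W' : Finset (Fin n)) : Prop :=
  ∃ 𝒯 : Set (Finset (Fin n)), 𝒯.Nonempty ∧
    (∀ W ∈ 𝒯, P.TriangularSet W) ∧
    (∀ W1 ∈ 𝒯, ∀ W2 ∈ 𝒯, P.TriConnected W1 W2) ∧
    (∀ 𝒯' : Set (Finset (Fin n)), 𝒯 ⊆ 𝒯' → (∀ W ∈ 𝒯', P.TriangularSet W) →
      (∀ W1 ∈ 𝒯', ∀ W2 ∈ 𝒯', P.TriConnected W1 W2) → 𝒯' = 𝒯) ∧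
    (W' : Set (Fin n)) = ⋃ W ∈ 𝒯, (W : Set (Fin n))

/-- The interfering set of message `k` at receiver `j` in the `W'`-restricted
index coding problem (its demand sets are `D j ∩ W'`, side information `S j ∩ W'`,
and message set `W'`). -/
def rInterf (P : ICP n) (W' : Finset (Fin n)) (k : Fin n) (j : Fin P.T) :
    Finset (Fin n) :=
  if k ∈ P.D j ∩ W' then P.Interf k j ∩ W' else ∅

/-- Adjacency in the alignment graph of the `W'`-restricted problem. -/
def rAlignAdj (P : ICP n) (W' : Finset (Fin n)) (i i' : Fin n) : Prop :=
  i ≠ i' ∧ ∃ (j : Fin P.T) (k : Fin n), k ∈ P.D j ∩ W' ∧ k ≠ i ∧ k ≠ i' ∧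
    i ∈ P.rInterf W' k j ∧ i' ∈ P.rInterf W' k j

/-- The alignment graph of the `W'`-restricted problem (messages outside `W'`
are isolated vertices). -/
def rAlignGraph (P : ICP n) (W' : Finset (Fin n)) : SimpleGraph (Fin n) where
  Adj := P.rAlignAdj W'
  symm := by
    refine ⟨?_⟩
    rintro a b ⟨hne, j, k, h1, h2, h3, h4, h5⟩
    exact ⟨hne.symm, j, k, h1, h3, h2, h5, h4⟩
  loopless := by refine ⟨?_⟩; rintro a ⟨hne, -⟩; exact hne rfl

/-- Conflict in the `W'`-restricted problem. -/
def rInConflict (P : ICP n) (W' : Finset (Fin n)) (i k : Fin n) : Prop :=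
  (∃ j, k ∈ P.D j ∩ W' ∧ i ∈ P.rInterf W' k j) ∨
  (∃ j, i ∈ P.D j ∩ W' ∧ k ∈ P.rInterf W' i j)

/-- There is a `W'`-restricted internal conflict: a conflict of the restricted
problem between two messages in the same `W'`-restricted alignment set. -/
def HasRestrictedInternalConflict (P : ICP n) (W' : Finset (Fin n)) : Prop :=
  ∃ i k, i ∈ W' ∧ k ∈ W' ∧ P.rInConflict W' i k ∧ (P.rAlignGraph W').Reachable i k

/-- The `W'`-restricted index coding problem is rate `1/2` feasible: there exist a
finite field `F` and vectors `V i ∈ F²` for `i ∈ W'` such that for every `k ∈ W'`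
and every receiver `j`, `V k ∉ span {V i : i ∈ Interf_k(j) ∩ W'}`. -/
def RestrictedRateHalfFeasible (P : ICP n) (W' : Finset (Fin n)) : Prop :=
  ∃ (F : Type) (_ : Field F) (_ : Fintype F) (V : Fin n → Fin 2 → F),
    ∀ k ∈ W', ∀ j : Fin P.T,
      V k ∉ Submodule.span F (V '' ((P.Interf k j ∩ W') : Set (Fin n)))

end ICP

/-!
Receiver `j` fails to decode `k` exactly when two message tuples agreeing on `S(j)` have the
same codeword but differ at `k`, i.e. when some linear relation `∑ dᵢ Vᵢ = 0` vanishes on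
`S(j)` and has `d_k ≠ 0`. Dividing by `d_k`, such relations are exactly the expressions of
`V_k` as a combination of the `Vᵢ` with `i ∉ {k} ∪ S(j)`, i.e. `i ∈ Interf_k(j)`.
-/

open Finset

theorem Fintype.sum_eq_add_sum_sdiff_insert_of_eq_zero {ι M : Type*} [Fintype ι] [DecidableEq ι]
    [AddCommMonoid M] {f : ι → M} {S : Finset ι} (k : ι) (hf : ∀ i ∈ S, f i = 0) :
    ∑ i, f i = f k + ∑ i ∈ univ \ insert k S, f i := by
  rw [← sum_insert (s := univ \ insert k S) (by simp)]
  exact (Finset.sum_subset (subset_univ _) fun i _ hi ↦ hf i (by simp_all)).symm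

theorem mem_span_image_sdiff_insert_iff {ι K M : Type*} [Fintype ι] [DecidableEq ι]
    [DivisionRing K] [AddCommGroup M] [Module K M] (v : ι → M) {S : Finset ι} {k : ι}
    (hk : k ∉ S) :
    v k ∈ Submodule.span K (v '' ↑(univ \ insert k S)) ↔
      ∃ d : ι → K, (∀ i ∈ S, d i = 0) ∧ ∑ i, d i • v i = 0 ∧ d k ≠ 0 := by
  rw [Submodule.mem_span_image_finset_iff_exists_fun']
  constructor
  · rintro ⟨c, hc⟩
    set d : ι → K := fun i ↦ if i = k then -1 else if i ∈ S then 0 else c i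
    have hdS : ∀ i ∈ S, d i = 0 := fun i hi ↦ by simp [d, hi, ne_of_mem_of_not_mem hi hk]
    have hdT : ∀ i ∈ univ \ insert k S, d i • v i = c i • v i := fun i hi ↦ by
      simp_all [d]
    refine ⟨d, hdS, ?_, by simp [d]⟩
    rw [Fintype.sum_eq_add_sum_sdiff_insert_of_eq_zero k fun i hi ↦ by simp [hdS i hi],
      sum_congr rfl hdT, hc]
    simp [d]
  · rintro ⟨d, hdS, hsum, hdk⟩
    refine ⟨fun i ↦ -(d k)⁻¹ * d i, ?_⟩
    have hrel : ∑ i ∈ univ \ insert k S, d i • v i = -(d k • v k) := by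
      refine eq_neg_of_add_eq_zero_right ?_
      rwa [Fintype.sum_eq_add_sum_sdiff_insert_of_eq_zero k fun i hi ↦ by simp [hdS i hi]]
        at hsum
    simp only [mul_smul, ← smul_sum, hrel]
    rw [smul_neg, neg_smul, neg_neg, smul_smul, inv_mul_cancel₀ hdk, one_smul]

theorem decoding_iff_no_conflict_general {n : ℕ} (P : ICP n) (F : Type) [Field F]
    (L : ℕ) (V : Fin n → Fin L → F) :
    (∀ (j : Fin P.T) (w w' : Fin n → F),
        (∀ i ∈ P.S j, w i = w' i) →
        (∑ i, w i • V i) = (∑ i, w' i • V i) →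
        ∀ k ∈ P.D j, w k = w' k) ↔
      (∀ (j : Fin P.T), ∀ k ∈ P.D j,
        V k ∉ Submodule.span F (V '' (P.Interf k j : Set (Fin n)))) := by
  have criterion : ∀ j, ∀ k ∈ P.D j,
      V k ∉ Submodule.span F (V '' (P.Interf k j : Set (Fin n))) ↔
        ∀ d : Fin n → F, (∀ i ∈ P.S j, d i = 0) → ∑ i, d i • V i = 0 → d k = 0 := by
    intro j k hk
    rw [ICP.Interf, if_pos hk,
      mem_span_image_sdiff_insert_iff V (disjoint_left.mp (P.hDS j) hk)]
    simp only [not_exists, not_and, not_not]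
  constructor
  · intro hdec j k hk
    refine (criterion j k hk).2 fun d hd hsum ↦ ?_
    simpa using hdec j d 0 hd (by simpa using hsum) k hk
  · intro hres j w w' hw hsum k hk
    refine sub_eq_zero.1 ((criterion j k hk).1 (hres j k hk) (w - w')
      (fun i hi ↦ sub_eq_zero.2 (hw i hi)) ?_)
    simp [sub_smul, sum_sub_distrib, hsum]

/-- With messages encoded as `c(w) = ∑ i, w i • V i`, every receiver
can decode all of its demanded messages from the codeword and its side information
iff for every receiver `j` and every `k ∈ D j`, `V k ∉ span {V i : i ∈ Interf_k(j)}`. -/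
theorem decoding_iff_no_conflict {n : ℕ} (P : ICP n) (F : Type) [Field F]
    (L : ℕ) (hL : 1 ≤ L) (V : Fin n → Fin L → F) :
    (∀ (j : Fin P.T) (w w' : Fin n → F),
        (∀ i ∈ P.S j, w i = w' i) →
        (∑ i, w i • V i) = (∑ i, w' i • V i) →
        ∀ k ∈ P.D j, w k = w' k) ↔
      (∀ (j : Fin P.T), ∀ k ∈ P.D j,
        V k ∉ Submodule.span F (V '' (P.Interf k j : Set (Fin n)))) :=
  decoding_iff_no_conflict_general P F L V
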